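/- arXiv:1803.01057 — 5 statements merged into one kernel-verified Lean document; each statement's English description precedes it below -/
import Mathlib

section
/- Let H be a complex Hilbert space, P0 an orthogonal projection on H, and f0 a unit vector with P0 f0 = f0; write P0⊥ = 1 − P0. Define E on B_h(H) × H by E(X,h) = ( P0⊥ X P0 + P0 X P0⊥ , i·Im⟨h,f0⟩ f0 + (P0 − f0⊗f0) h + P0⊥ X f0 ). Then E is a continuous real-linear map satisfying E∘E = E, and the range of E equals the set {(X P0 − P0 X, X f0) : X ∈ B(H), X* = −X}; moreover E fixes every element of this set. -/
open scoped InnerProductSpace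
open ContinuousLinearMap

/-- The rank-one operator `x ⊗ y`, with `(x ⊗ y) z = ⟨z, y⟩ x` (inner product linear in
the first variable); in Mathlib's convention this is `z ↦ ⟪y, z⟫ • x`. -/
noncomputable def rankOne {H : Type*} [NormedAddCommGroup H] [InnerProductSpace ℂ H]
    (x y : H) : H →L[ℂ] H :=
  (innerSL ℂ y).smulRight x

/-- The map `E(X,h) = (P0⊥ X P0 + P0 X P0⊥ ,
i·Im⟨h,f0⟩ f0 + (P0 − f0⊗f0) h + P0⊥ X f0)`, where `P0⊥ = 1 − P0` and the inner product
`⟨h, f0⟩` is linear in the first variable (so `⟨h,f0⟩ = ⟪f0, h⟫` in Mathlib's convention). -/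
noncomputable def Eproj {H : Type*} [NormedAddCommGroup H] [InnerProductSpace ℂ H]
    [CompleteSpace H] (P0 : H →L[ℂ] H) (f0 : H) :
    (H →L[ℂ] H) × H → (H →L[ℂ] H) × H :=
  fun Xh =>
    ((1 - P0) * Xh.1 * P0 + P0 * Xh.1 * (1 - P0),
      (Complex.I * ((⟪f0, Xh.2⟫_ℂ : ℂ).im : ℂ)) • f0 + (P0 - rankOne f0 f0) Xh.2
        + (1 - P0) (Xh.1 f0))

/-! Since `i·Im c − c = −Re c`, the second component of `E(X, h)` is
`P0 h − Re⟨h, f0⟩ f0 + P0⊥ X f0`, while the first is the off-diagonal part of `X` with respect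
to `P0`. For an idempotent `p` one has `[[x, p], p] = offDiag x` and `offDiag [a, p] = [a, p]`,
which gives `E ∘ E = E` and shows that `E` fixes `([A, P0], A f0)` for anti-Hermitian `A`.
Conversely `E(X, h) = ([A, P0], A f0)` for `A = [X, P0] + B`, where `B` is an anti-Hermitian
operator of rank at most two commuting with `P0` and sending `f0` to `P0 h − Re⟨h, f0⟩ f0`. -/

section Ring

variable {R : Type*} [Ring R] {p : R}

def offDiag (p x : R) : R := (1 - p) * x * p + p * x * (1 - p)

lemma IsIdempotentElem.commutator_commutator (hp : IsIdempotentElem p) (x : R) :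
    (x * p - p * x) * p - p * (x * p - p * x) = offDiag p x := by
  simp only [offDiag, mul_sub, sub_mul, mul_one, one_mul, mul_assoc, hp.eq, hp.mul_self_mul]
  abel

lemma IsIdempotentElem.offDiag_commutator (hp : IsIdempotentElem p) (a : R) :
    offDiag p (a * p - p * a) = a * p - p * a := by
  simp only [offDiag, mul_sub, sub_mul, mul_one, one_mul, mul_assoc, hp.eq, hp.mul_self_mul]
  abel

lemma IsIdempotentElem.offDiag_offDiag (hp : IsIdempotentElem p) (x : R) :
    offDiag p (offDiag p x) = offDiag p x := by
  simpa only [hp.commutator_commutator] using hp.offDiag_commutator (x * p - p * x)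

variable [StarRing R]

lemma IsSelfAdjoint.star_commutator (hp : IsSelfAdjoint p) (a : R) :
    star (a * p - p * a) = -(star a * p - p * star a) := by
  rw [star_sub, star_mul, star_mul, hp.star_eq, neg_sub]

lemma IsSelfAdjoint.isSelfAdjoint_commutator (hp : IsSelfAdjoint p) {a : R} (ha : star a = -a) :
    IsSelfAdjoint (a * p - p * a) := by
  rw [IsSelfAdjoint, hp.star_commutator, ha]
  noncomm_ring

end Ring

lemma Complex.conj_eq_neg_of_re_eq_zero {z : ℂ} (hz : z.re = 0) : starRingEnd ℂ z = -z := by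
  simp [Complex.ext_iff, hz]

section InnerProductSpace

variable {H : Type*} [NormedAddCommGroup H] [InnerProductSpace ℂ H] {P : H →L[ℂ] H} {f u : H}

lemma rankOne_apply (x y z : H) : rankOne x y z = ⟪y, z⟫_ℂ • x := rfl

noncomputable def antiHermitianSending (f u : H) : H →L[ℂ] H :=
  rankOne u f - rankOne f u - ⟪f, u⟫_ℂ • rankOne f f

lemma antiHermitianSending_apply_self (hf : ‖f‖ = 1) (hu : (⟪f, u⟫_ℂ).re = 0) :
    antiHermitianSending f u f = u := by
  have hsum : ⟪u, f⟫_ℂ + ⟪f, u⟫_ℂ = 0 := by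
    rw [← inner_conj_symm u f, Complex.conj_eq_neg_of_re_eq_zero hu, neg_add_cancel]
  have hff : ⟪f, f⟫_ℂ = 1 := by rw [inner_self_eq_norm_sq_to_K, hf]; norm_num
  simp only [antiHermitianSending, sub_apply, smul_apply, rankOne_apply, hff, one_smul]
  rw [sub_sub, ← add_smul, hsum, zero_smul, sub_zero]

/-- When `P` is an orthogonal projection fixing the unit vector `f`, this is the real-orthogonal
projection onto `{w ∈ range P | re ⟪f, w⟫ = 0}`. -/
noncomputable def projReOrth (P : H →L[ℂ] H) (f h : H) : H := P h - (⟪f, h⟫_ℂ).re • f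

lemma projReOrth_eq_self {w : H} (hw : P w = w) (hre : (⟪f, w⟫_ℂ).re = 0) :
    projReOrth P f w = w := by
  rw [projReOrth, hw, hre, zero_smul, sub_zero]

lemma apply_projReOrth (hPP : IsIdempotentElem P) (hf : P f = f) (h : H) :
    P (projReOrth P f h) = projReOrth P f h := by
  rw [projReOrth, map_sub, map_smul_of_tower, hf, ← mul_apply_eq_comp, hPP.eq]

lemma offDiag_apply_of_apply_eq (hf : P f = f) (X : H →L[ℂ] H) :
    offDiag P X f = (1 - P) (X f) := by
  simp [offDiag, mul_apply_eq_comp, hf]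

variable [CompleteSpace H]

lemma adjoint_rankOne (x y : H) : adjoint (rankOne x y) = rankOne y x :=
  InnerProductSpace.adjoint_rankOne x y

lemma inner_apply_eq_of_isSelfAdjoint (hP : IsSelfAdjoint P) (hf : P f = f) (v : H) :
    ⟪f, P v⟫_ℂ = ⟪f, v⟫_ℂ := by
  rw [← adjoint_inner_left, hP.adjoint_eq, hf]

lemma re_inner_apply_self_of_adjoint_eq_neg {A : H →L[ℂ] H} (hA : adjoint A = -A) (x : H) :
    (⟪x, A x⟫_ℂ).re = 0 := by
  have h : ⟪A x, x⟫_ℂ = -⟪x, A x⟫_ℂ := by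
    rw [← adjoint_inner_right, hA, neg_apply, inner_neg_right]
  have h_re := inner_re_symm (𝕜 := ℂ) x (A x)
  rw [h] at h_re
  simp only [RCLike.re_to_complex, Complex.neg_re] at h_re
  linarith

lemma adjoint_antiHermitianSending (hu : (⟪f, u⟫_ℂ).re = 0) :
    adjoint (antiHermitianSending f u) = -antiHermitianSending f u := by
  simp only [antiHermitianSending, map_sub, adjoint_rankOne, LinearIsometryEquiv.map_smulₛₗ,
    Complex.conj_eq_neg_of_re_eq_zero hu]
  module

lemma commute_antiHermitianSending (hP : IsSelfAdjoint P) (hf : P f = f) (hu : P u = u) :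
    Commute P (antiHermitianSending f u) := by
  ext v
  simp only [antiHermitianSending, mul_apply_eq_comp, sub_apply, smul_apply, rankOne_apply,
    map_sub, map_smul, hf, hu, inner_apply_eq_of_isSelfAdjoint hP hf,
    inner_apply_eq_of_isSelfAdjoint hP hu]

lemma re_inner_projReOrth (hP : IsSelfAdjoint P) (hf : P f = f) (hf1 : ‖f‖ = 1) (h : H) :
    (⟪f, projReOrth P f h⟫_ℂ).re = 0 := by
  rw [projReOrth, inner_sub_right, inner_smul_right_eq_smul, inner_apply_eq_of_isSelfAdjoint hP hf,
    inner_self_eq_norm_sq_to_K, hf1]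
  simp

lemma projReOrth_projReOrth (hP : IsSelfAdjoint P) (hPP : IsIdempotentElem P) (hf : P f = f)
    (hf1 : ‖f‖ = 1) (h : H) : projReOrth P f (projReOrth P f h) = projReOrth P f h :=
  projReOrth_eq_self (apply_projReOrth hPP hf h) (re_inner_projReOrth hP hf hf1 h)

lemma projReOrth_add_one_sub_apply (hP : IsSelfAdjoint P) (hPP : IsIdempotentElem P)
    (hf : P f = f) (u y : H) : projReOrth P f (u + (1 - P) y) = projReOrth P f u := by
  have hPQ : P ((1 - P) y) = 0 := by rw [← mul_apply_eq_comp, hPP.mul_one_sub_self, zero_apply]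
  have hfQ : ⟪f, (1 - P) y⟫_ℂ = 0 := by
    rw [sub_apply, one_apply_eq_self, inner_sub_right, inner_apply_eq_of_isSelfAdjoint hP hf,
      sub_self]
  simp only [projReOrth, map_add, hPQ, inner_add_right, hfQ, add_zero]

variable (P f) in
lemma Eproj_apply (X : H →L[ℂ] H) (h : H) :
    Eproj P f (X, h) = (offDiag P X, projReOrth P f h + (1 - P) (X f)) := by
  have hc : (Complex.I * ((⟪f, h⟫_ℂ).im : ℂ)) - ⟪f, h⟫_ℂ = -((⟪f, h⟫_ℂ).re : ℂ) := by
    nth_rw 2 [← Complex.re_add_im ⟪f, h⟫_ℂ]; ring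
  have hcf : (Complex.I * ((⟪f, h⟫_ℂ).im : ℂ)) • f - ⟪f, h⟫_ℂ • f = -(⟪f, h⟫_ℂ).re • f := by
    rw [← sub_smul, hc, neg_smul, neg_smul, Complex.coe_smul]
  refine Prod.ext rfl ?_
  simp only [Eproj, projReOrth, sub_apply, rankOne_apply]
  linear_combination (norm := module) hcf

variable (P f) in
lemma continuous_Eproj : Continuous (Eproj P f) := by
  unfold Eproj
  fun_prop

variable (P f) in
lemma Eproj_smul_add (r : ℝ) (x y : (H →L[ℂ] H) × H) :
    Eproj P f (r • x + y) = r • Eproj P f x + Eproj P f y := by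
  obtain ⟨X, h⟩ := x
  obtain ⟨Y, k⟩ := y
  simp only [Prod.smul_mk, Prod.mk_add_mk, Eproj_apply, Prod.mk.injEq]
  constructor
  · simp only [offDiag, mul_add, add_mul, mul_smul_comm, smul_mul_assoc, smul_add]
    abel
  · simp only [projReOrth, add_apply, smul_apply, map_add, map_smul_of_tower, inner_add_right,
      inner_smul_right_eq_smul, Complex.add_re, Complex.real_smul, Complex.re_ofReal_mul]
    module

lemma Eproj_Eproj (hP : IsSelfAdjoint P) (hPP : IsIdempotentElem P) (hf : P f = f)
    (hf1 : ‖f‖ = 1) (X : H →L[ℂ] H) (h : H) : Eproj P f (Eproj P f (X, h)) = Eproj P f (X, h) := by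
  rw [Eproj_apply, Eproj_apply, hPP.offDiag_offDiag, projReOrth_add_one_sub_apply hP hPP hf,
    projReOrth_projReOrth hP hPP hf hf1, offDiag_apply_of_apply_eq hf, ← mul_apply_eq_comp,
    hPP.one_sub.eq]

lemma Eproj_commutator_of_adjoint_eq_neg (hPP : IsIdempotentElem P) (hf : P f = f)
    {A : H →L[ℂ] H} (hA : adjoint A = -A) :
    Eproj P f (A * P - P * A, A f) = (A * P - P * A, A f) := by
  have hproj : projReOrth P f (A f) = P (A f) := by
    rw [projReOrth, re_inner_apply_self_of_adjoint_eq_neg hA, zero_smul, sub_zero]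
  have hcompl : (1 - P) ((A * P - P * A) f) = (1 - P) (A f) := by
    rw [sub_apply (A * P), mul_apply_eq_comp, mul_apply_eq_comp, hf, map_sub,
      ← mul_apply_eq_comp (1 - P) P, hPP.one_sub_mul_self, zero_apply, sub_zero]
  rw [Eproj_apply, hPP.offDiag_commutator, hproj, hcompl, sub_apply, one_apply_eq_self,
    add_sub_cancel]

lemma exists_Eproj_eq_commutator (hP : IsSelfAdjoint P) (hPP : IsIdempotentElem P)
    (hf : P f = f) (hf1 : ‖f‖ = 1) {X : H →L[ℂ] H} (hX : IsSelfAdjoint X) (h : H) :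
    ∃ A : H →L[ℂ] H, adjoint A = -A ∧ Eproj P f (X, h) = (A * P - P * A, A f) := by
  set u := projReOrth P f h
  have hu : P u = u := apply_projReOrth hPP hf h
  have hre : (⟪f, u⟫_ℂ).re = 0 := re_inner_projReOrth hP hf hf1 h
  set B := antiHermitianSending f u
  have hB : B * P - P * B = 0 := by rw [(commute_antiHermitianSending hP hf hu).eq, sub_self]
  refine ⟨X * P - P * X + B, ?_, ?_⟩
  · rw [map_add, adjoint_antiHermitianSending hre, ← star_eq_adjoint, hP.star_commutator,
      hX.star_eq, neg_add]
  · have hcomm : (X * P - P * X + B) * P - P * (X * P - P * X + B) = offDiag P X := by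
      rw [add_mul, mul_add, add_sub_add_comm, hB, add_zero, hPP.commutator_commutator]
    have happ : (X * P - P * X + B) f = (1 - P) (X f) + u := by
      rw [add_apply, antiHermitianSending_apply_self hf1 hre, sub_apply (X * P), mul_apply_eq_comp,
        mul_apply_eq_comp, hf, sub_apply 1 P, one_apply_eq_self]
    rw [Eproj_apply, hcomm, happ, add_comm]

end InnerProductSpace

/-- `E` is a continuous real-linear map on `B_h(H) × H` with `E ∘ E = E`,
whose range is the tangent space `{(X P0 − P0 X, X f0) : X* = −X}`; moreover `E` fixes
every element of this set. -/
theorem Eproj_is_projection_onto_tangent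
    {H : Type*} [NormedAddCommGroup H] [InnerProductSpace ℂ H] [CompleteSpace H]
    (P0 : H →L[ℂ] H) (hP0sa : IsSelfAdjoint P0) (hP0idem : P0 * P0 = P0)
    (f0 : H) (hf0 : ‖f0‖ = 1) (hf0fix : P0 f0 = f0) :
    Continuous (Eproj P0 f0) ∧
    (∀ (r : ℝ) (x y : (H →L[ℂ] H) × H),
      Eproj P0 f0 (r • x + y) = r • Eproj P0 f0 x + Eproj P0 f0 y) ∧
    (∀ (X : H →L[ℂ] H) (h : H), IsSelfAdjoint X →
      Eproj P0 f0 (Eproj P0 f0 (X, h)) = Eproj P0 f0 (X, h)) ∧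
    {Y : (H →L[ℂ] H) × H | ∃ X : H →L[ℂ] H, ∃ h : H, IsSelfAdjoint X ∧
        Eproj P0 f0 (X, h) = Y} =
      {Y : (H →L[ℂ] H) × H | ∃ X : H →L[ℂ] H, adjoint X = -X ∧
        Y = (X * P0 - P0 * X, X f0)} ∧
    (∀ X : H →L[ℂ] H, adjoint X = -X →
      Eproj P0 f0 (X * P0 - P0 * X, X f0) = (X * P0 - P0 * X, X f0)) := by
  have hPP : IsIdempotentElem P0 := hP0idem
  refine ⟨continuous_Eproj P0 f0, Eproj_smul_add P0 f0,
    fun X h _ => Eproj_Eproj hP0sa hPP hf0fix hf0 X h, ?_,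
    fun A hA => Eproj_commutator_of_adjoint_eq_neg hPP hf0fix hA⟩
  ext Y
  constructor
  · rintro ⟨X, h, hX, rfl⟩
    exact exists_Eproj_eq_commutator hP0sa hPP hf0fix hf0 hX h
  · rintro ⟨A, hA, rfl⟩
    refine ⟨A * P0 - P0 * A, A f0, hP0sa.isSelfAdjoint_commutator ?_,
      Eproj_commutator_of_adjoint_eq_neg hPP hf0fix hA⟩
    rwa [star_eq_adjoint]
end

section
/- Let H be a complex Hilbert space, P0 an orthogonal projection on H, f0 a unit vector with P0 f0 = f0, and X ∈ B(H) anti-Hermitian. Then there exists an anti-Hermitian Y0 ∈ B(H) with Y0 P0 = P0 Y0 and Y0 f0 = 0 such that ‖X + Y0‖ ≤ ‖X + Y‖ for every anti-Hermitian Y ∈ B(H) with Y P0 = P0 Y and Y f0 = 0. In other words, the quotient norm inf{‖X+Y‖ : Y in the vertical space at (P0,f0)} is attained: every tangent vector admits a minimal lifting. -/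
/-!
Minimal liftings exist because the vertical space is closed in the weak operator topology, while
the operator norm is WOT-lower semicontinuous with WOT-compact closed balls: a bounded net of
operators has a WOT-limit point, obtained by taking ultrafilter limits of its matrix coefficients
`⟪A x, y⟫` and representing the limit form by an operator via Fréchet–Riesz. A lower
semicontinuous function with compact sublevel sets attains its infimum on any nonempty closed set.
-/

open ContinuousLinearMap Filter Topology
open scoped InnerProductSpace

section

variable {𝕜 E F : Type*} [RCLike 𝕜] [NormedAddCommGroup E] [NormedSpace 𝕜 E]
  [NormedAddCommGroup F] [InnerProductSpace 𝕜 F]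

theorem ContinuousLinearMap.norm_inner_apply_le_of_norm_le {A : E →L[𝕜] F} {r : ℝ}
    (hA : ‖A‖ ≤ r) (x : E) (y : F) : ‖⟪A x, y⟫_𝕜‖ ≤ r * ‖x‖ * ‖y‖ :=
  calc ‖⟪A x, y⟫_𝕜‖ ≤ ‖A x‖ * ‖y‖ := norm_inner_le_norm _ _
    _ ≤ ‖A‖ * ‖x‖ * ‖y‖ := by gcongr; exact A.le_opNorm x
    _ ≤ r * ‖x‖ * ‖y‖ := by gcongr

namespace ContinuousLinearMapWOT

variable [CompleteSpace F]

theorem exists_tendsto_of_tendsto_inner {α : Type*} {l : Filter α} [l.NeBot]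
    {Z : α → E →WOT[𝕜] F} {r : ℝ} (hZ : ∀ᶠ a in l, ‖toCLM (Z a)‖ ≤ r)
    (hlim : ∀ x y, ∃ c, Tendsto (fun a => ⟪Z a x, y⟫_𝕜) l (𝓝 c)) :
    ∃ T : E →WOT[𝕜] F, ‖toCLM T‖ ≤ r ∧ Tendsto Z l (𝓝 T) := by
  choose g hg using hlim
  obtain ⟨a₀, ha₀⟩ := hZ.exists
  have hr : 0 ≤ r := (norm_nonneg _).trans ha₀
  have hg_le (x : E) (y : F) : ‖g x y‖ ≤ r * ‖x‖ * ‖y‖ :=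
    le_of_tendsto (hg x y).norm <| hZ.mono fun a ha => norm_inner_apply_le_of_norm_le ha x y
  let L (x : E) : StrongDual 𝕜 F := LinearMap.mkContinuous
    { toFun := g x
      map_add' := fun y y' => tendsto_nhds_unique (hg x (y + y'))
        (by simpa only [inner_add_right] using (hg x y).add (hg x y'))
      map_smul' := fun c y => tendsto_nhds_unique (hg x (c • y))
        (by simpa only [inner_smul_right, RingHom.id_apply, smul_eq_mul] using
          (hg x y).const_mul c) }
    (r * ‖x‖) (hg_le x)
  let T₀ (x : E) : F := (InnerProductSpace.toDual 𝕜 F).symm (L x)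
  have hT₀ (x : E) (y : F) : Tendsto (fun a => ⟪Z a x, y⟫_𝕜) l (𝓝 ⟪T₀ x, y⟫_𝕜) := by
    convert hg x y using 2
    exact InnerProductSpace.toDual_symm_apply
  have hT₀_unique (x : E) (v : F) (hv : ∀ y, Tendsto (fun a => ⟪Z a x, y⟫_𝕜) l (𝓝 ⟪v, y⟫_𝕜)) :
      T₀ x = v :=
    ext_inner_right 𝕜 fun y => tendsto_nhds_unique (hT₀ x y) (hv y)
  have hT₀_norm (x : E) : ‖T₀ x‖ ≤ r * ‖x‖ :=
    (LinearIsometryEquiv.norm_map _ _).trans_le (LinearMap.mkContinuous_norm_le _ (by positivity) _)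
  let T : E →L[𝕜] F := LinearMap.mkContinuous
    { toFun := T₀
      map_add' := fun x x' => hT₀_unique _ _ fun y => by
        simpa only [map_add, inner_add_left] using (hT₀ x y).add (hT₀ x' y)
      map_smul' := fun c x => hT₀_unique _ _ fun y => by
        simpa only [map_smul, inner_smul_left, RingHom.id_apply] using (hT₀ x y).const_mul _ }
    r hT₀_norm
  refine ⟨ofCLM T, T.opNorm_le_bound hr hT₀_norm,
    tendsto_iff_forall_inner_apply_tendsto.2 fun x y => ?_⟩
  have h := (RCLike.continuous_conj.tendsto _).comp (hT₀ x y)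
  simp only [Function.comp_def, inner_conj_symm] at h
  exact h

theorem isCompact_setOf_norm_le (r : ℝ) : IsCompact {A : E →WOT[𝕜] F | ‖toCLM A‖ ≤ r} := by
  refine isCompact_iff_ultrafilter_le_nhds.2 fun U hU => ?_
  have hUr : ∀ᶠ A in (U : Filter (E →WOT[𝕜] F)), ‖toCLM A‖ ≤ r := le_principal_iff.1 hU
  refine exists_tendsto_of_tendsto_inner (Z := id) hUr fun x y => ?_
  have hcoeff : ((U.map fun A => ⟪A x, y⟫_𝕜 : Ultrafilter 𝕜) : Filter 𝕜) ≤
      𝓟 (Metric.closedBall 0 (r * ‖x‖ * ‖y‖)) := by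
    rw [Ultrafilter.coe_map, le_principal_iff]
    exact hUr.mono fun A hA => mem_closedBall_zero_iff.2 (norm_inner_apply_le_of_norm_le hA x y)
  obtain ⟨c, -, hc⟩ := (isCompact_closedBall _ _).ultrafilter_le_nhds _ hcoeff
  exact ⟨c, hc⟩

theorem lowerSemicontinuous_norm_toCLM :
    LowerSemicontinuous fun A : E →WOT[𝕜] F => ‖toCLM A‖ :=
  lowerSemicontinuous_iff_isClosed_preimage.2 fun r => (isCompact_setOf_norm_le r).isClosed

theorem exists_isMinOn_norm_add {S : Set (E →WOT[𝕜] F)} (hS : IsClosed S) (hne : S.Nonempty)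
    (X : E →L[𝕜] F) : ∃ Y₀ ∈ S, IsMinOn (fun Y => ‖X + toCLM Y‖) S Y₀ := by
  obtain ⟨Y₁, hY₁⟩ := hne
  set f : (E →WOT[𝕜] F) → ℝ := fun Y => ‖X + toCLM Y‖
  have hf : LowerSemicontinuous f :=
    lowerSemicontinuous_norm_toCLM.comp (continuous_const_add (ofCLM X))
  set K := S ∩ f ⁻¹' Set.Iic (f Y₁)
  have hK : IsCompact K := by
    refine (isCompact_setOf_norm_le (f Y₁ + ‖X‖)).of_isClosed_subset
      (hS.inter (hf.isClosed_preimage _)) fun Y hY => ?_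
    calc ‖toCLM Y‖ = ‖(X + toCLM Y) - X‖ := by rw [add_sub_cancel_left]
      _ ≤ f Y + ‖X‖ := norm_sub_le _ _
      _ ≤ f Y₁ + ‖X‖ := by gcongr; exact hY.2
  have hY₁K : Y₁ ∈ K := ⟨hY₁, le_refl (f Y₁)⟩
  obtain ⟨Y₀, hY₀, hmin⟩ := (hf.lowerSemicontinuousOn K).exists_isMinOn ⟨Y₁, hY₁K⟩ hK
  refine ⟨Y₀, hY₀.1, fun Y hY => ?_⟩
  by_cases hYK : f Y ≤ f Y₁
  · exact hmin ⟨hY, hYK⟩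
  · exact (hmin hY₁K).trans (le_of_not_ge hYK)

end ContinuousLinearMapWOT

end

open ContinuousLinearMapWOT

section

variable {𝕜 E : Type*} [RCLike 𝕜] [NormedAddCommGroup E] [InnerProductSpace 𝕜 E] [CompleteSpace E]

namespace ContinuousLinearMapWOT

instance : SeparatelyContinuousMul (E →WOT[𝕜] E) where
  continuous_const_mul {B} := continuous_iff.2 fun x y => by
    show Continuous fun A : E →WOT[𝕜] E => ⟪y, toCLM B (A x)⟫_𝕜
    simp_rw [← adjoint_inner_left]
    exact continuous_inner_apply (𝕜 := 𝕜) continuous_id x _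
  continuous_mul_const {B} := continuous_iff.2 fun x y =>
    continuous_inner_apply (𝕜 := 𝕜) continuous_id (B x) y

end ContinuousLinearMapWOT

def verticalSpace (P : E →L[𝕜] E) (f : E) : Set (E →L[𝕜] E) :=
  {Y | adjoint Y = -Y ∧ Y * P = P * Y ∧ Y f = 0}

theorem isClosed_toCLM_preimage_verticalSpace (P : E →L[𝕜] E) (f : E) :
    IsClosed (toCLM ⁻¹' verticalSpace P f : Set (E →WOT[𝕜] E)) := by
  have h_anti : IsClosed {A : E →WOT[𝕜] E | adjoint (toCLM A) = -toCLM A} := by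
    convert isClosed_eq continuous_star (continuous_neg (G := E →WOT[𝕜] E)) using 3 with A
    exact toCLM_injective.eq_iff (a := star A) (b := -A)
  have h_comm : IsClosed {A : E →WOT[𝕜] E | toCLM A * P = P * toCLM A} := by
    have hP := continuous_const_mul (ofCLM P : E →WOT[𝕜] E)
    convert isClosed_eq (continuous_mul_const (ofCLM P)) hP using 3 with A
    exact toCLM_injective.eq_iff
  have h_kill : IsClosed {A : E →WOT[𝕜] E | A f = 0} := by
    have h : {A : E →WOT[𝕜] E | A f = 0} = ⋂ y : E, {A | ⟪y, A f⟫_𝕜 = 0} := by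
      ext A
      simp only [Set.mem_iInter, Set.mem_ofPred_eq, ext_iff_inner_left 𝕜 (x := A f),
        inner_zero_right]
    rw [h]
    exact isClosed_iInter fun y => isClosed_eq (continuous_inner_apply continuous_id f y)
      continuous_const
  exact h_anti.inter (h_comm.inter h_kill)

end

theorem exists_minimal_lifting_general
    {H : Type*} [NormedAddCommGroup H] [InnerProductSpace ℂ H] [CompleteSpace H]
    (P0 : H →L[ℂ] H)
    (f0 : H)
    (X : H →L[ℂ] H) :
    ∃ Y0 : H →L[ℂ] H, adjoint Y0 = -Y0 ∧ Y0 * P0 = P0 * Y0 ∧ Y0 f0 = 0 ∧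
      ∀ Y : H →L[ℂ] H, adjoint Y = -Y → Y * P0 = P0 * Y → Y f0 = 0 →
        ‖X + Y0‖ ≤ ‖X + Y‖ := by
  obtain ⟨Y0, ⟨h_anti, h_comm, h_kill⟩, hmin⟩ :=
    exists_isMinOn_norm_add (isClosed_toCLM_preimage_verticalSpace P0 f0)
      ⟨0, by simp [verticalSpace]⟩ X
  exact ⟨toCLM Y0, h_anti, h_comm, h_kill,
    fun Y hY₁ hY₂ hY₃ => hmin (a := ofCLM Y) ⟨hY₁, hY₂, hY₃⟩⟩

/-- For an orthogonal projection `P0`, a unit vector `f0` with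
`P0 f0 = f0`, and an anti-Hermitian `X ∈ B(H)`, there is an anti-Hermitian `Y0`
commuting with `P0` and killing `f0` (i.e. an element of the vertical space at
`(P0, f0)`) such that `‖X + Y0‖ ≤ ‖X + Y‖` for every vertical `Y`: the quotient norm is
attained, i.e. every tangent vector admits a minimal lifting. -/
theorem exists_minimal_lifting
    {H : Type*} [NormedAddCommGroup H] [InnerProductSpace ℂ H] [CompleteSpace H]
    (P0 : H →L[ℂ] H) (hP0sa : IsSelfAdjoint P0) (hP0idem : P0 * P0 = P0)
    (f0 : H) (hf0 : ‖f0‖ = 1) (hf0fix : P0 f0 = f0)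
    (X : H →L[ℂ] H) (hX : adjoint X = -X) :
    ∃ Y0 : H →L[ℂ] H, adjoint Y0 = -Y0 ∧ Y0 * P0 = P0 * Y0 ∧ Y0 f0 = 0 ∧
      ∀ Y : H →L[ℂ] H, adjoint Y = -Y → Y * P0 = P0 * Y → Y f0 = 0 →
        ‖X + Y0‖ ≤ ‖X + Y‖ :=
  exists_minimal_lifting_general P0 f0 X
end

section
/- Let H be a complex Hilbert space, P0 an orthogonal projection, f0 a unit vector with P0 f0 = f0, and let K be the vertical space at (P0,f0), i.e. the set of anti-Hermitian B ∈ B(H) with B P0 = P0 B and B f0 = 0. If X0 ∈ B(H) is anti-Hermitian and ‖X0 + B‖ ≥ ‖X0‖ for all B ∈ K, then ‖X0² + B X0 + X0 B‖ ≥ ‖X0‖² for all B ∈ K. -/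
/-!
Perturbing `X0` inside the vertical space along the ray `t • B` (`t > 0`) keeps `‖X0 + t • B‖ ≥ ‖X0‖`.
For anti-Hermitian operators the C*-identity turns this into `‖(X0 + t • B)²‖ ≥ ‖X0‖²`, and
`(X0 + t • B)² = (1 - t) X0² + t (X0² + B X0 + X0 B) + t² B²`. The triangle inequality, division by
`t` and the limit `t → 0⁺` give the claim.
-/

open ContinuousLinearMap Filter Topology

theorem CStarRing.norm_mul_self_of_star_eq_neg {A : Type*} [NonUnitalNormedRing A] [StarRing A]
    [CStarRing A] {x : A} (hx : star x = -x) : ‖x * x‖ = ‖x‖ ^ 2 := by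
  rw [sq, ← CStarRing.norm_star_mul_self, hx, neg_mul, norm_neg]

theorem add_smul_mul_self_eq {R A : Type*} [CommRing R] [Ring A] [Algebra R A] (x b : A) (t : R) :
    (x + t • b) * (x + t • b) =
      (1 - t) • (x * x) + t • (x * x + b * x + x * b) + (t * t) • (b * b) := by
  simp only [mul_add, add_mul, smul_mul_assoc, mul_smul_comm, smul_smul, smul_add]
  module

section NormedAlgebra

variable {A : Type*} [NormedRing A] [NormedAlgebra ℝ A]

theorem norm_add_smul_mul_self_le {x b : A} {t : ℝ} (ht0 : 0 ≤ t) (ht1 : t ≤ 1) :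
    ‖(x + t • b) * (x + t • b)‖ ≤
      (1 - t) * ‖x‖ ^ 2 + t * ‖x * x + b * x + x * b‖ + t * t * ‖b * b‖ := by
  calc ‖(x + t • b) * (x + t • b)‖
      = ‖(1 - t) • (x * x) + t • (x * x + b * x + x * b) + (t * t) • (b * b)‖ := by
        rw [add_smul_mul_self_eq]
    _ ≤ ‖(1 - t) • (x * x)‖ + ‖t • (x * x + b * x + x * b)‖ + ‖(t * t) • (b * b)‖ :=
        norm_add₃_le
    _ = (1 - t) * ‖x * x‖ + t * ‖x * x + b * x + x * b‖ + t * t * ‖b * b‖ := by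
        rw [norm_smul, norm_smul, norm_smul, Real.norm_of_nonneg (sub_nonneg.2 ht1),
          Real.norm_of_nonneg ht0, Real.norm_of_nonneg (mul_nonneg ht0 ht0)]
    _ ≤ (1 - t) * ‖x‖ ^ 2 + t * ‖x * x + b * x + x * b‖ + t * t * ‖b * b‖ := by
        gcongr
        exact sq ‖x‖ ▸ norm_mul_le x x

theorem sq_norm_le_norm_mul_self_add_of_eventually_le {x b : A}
    (h : ∀ᶠ t in 𝓝[>] (0 : ℝ), ‖x‖ ^ 2 ≤ ‖(x + t • b) * (x + t • b)‖) :
    ‖x‖ ^ 2 ≤ ‖x * x + b * x + x * b‖ := by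
  have hlim : Tendsto (fun t : ℝ => ‖x * x + b * x + x * b‖ + t * ‖b * b‖) (𝓝[>] 0)
      (𝓝 ‖x * x + b * x + x * b‖) := by
    have hcont : Continuous fun t : ℝ => ‖x * x + b * x + x * b‖ + t * ‖b * b‖ := by fun_prop
    simpa using (hcont.tendsto 0).mono_left nhdsWithin_le_nhds
  refine ge_of_tendsto hlim ?_
  filter_upwards [h, Ioc_mem_nhdsGT one_pos] with t ht ⟨ht0, ht1⟩
  have hsplit := norm_add_smul_mul_self_le (x := x) (b := b) ht0.le ht1
  have hscaled : t * ‖x‖ ^ 2 ≤ t * (‖x * x + b * x + x * b‖ + t * ‖b * b‖) := by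
    linarith
  exact le_of_mul_le_mul_left hscaled ht0

end NormedAlgebra

theorem minimal_lifting_square_norm_general
    {H : Type*} [NormedAddCommGroup H] [InnerProductSpace ℂ H] [CompleteSpace H]
    (P0 : H →L[ℂ] H)
    (f0 : H)
    (X0 : H →L[ℂ] H) (hX0 : adjoint X0 = -X0)
    (hmin : ∀ B : H →L[ℂ] H, adjoint B = -B → B * P0 = P0 * B → B f0 = 0 →
      ‖X0‖ ≤ ‖X0 + B‖) :
    ∀ B : H →L[ℂ] H, adjoint B = -B → B * P0 = P0 * B → B f0 = 0 →
      ‖X0‖ ^ 2 ≤ ‖X0 * X0 + B * X0 + X0 * B‖ := by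
  intro B hB hBP hBf
  rw [← star_eq_adjoint] at hX0 hB
  refine sq_norm_le_norm_mul_self_add_of_eventually_le
    (eventually_nhdsWithin_of_forall fun t _ => ?_)
  have htB : star (t • B) = -(t • B) := by rw [star_smul, hB, star_trivial, smul_neg]
  have hle : ‖X0‖ ≤ ‖X0 + t • B‖ :=
    hmin (t • B) (by rw [← star_eq_adjoint, htB]) (by rw [smul_mul_assoc, hBP, mul_smul_comm])
      (by rw [smul_apply, hBf, smul_zero])
  rw [CStarRing.norm_mul_self_of_star_eq_neg (by rw [star_add, hX0, htB, neg_add])]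
  gcongr

/-- If `X0` is anti-Hermitian and `‖X0 + B‖ ≥ ‖X0‖` for every `B` in the
vertical space at `(P0, f0)` (anti-Hermitian, commuting with `P0`, killing `f0`), then
`‖X0² + B X0 + X0 B‖ ≥ ‖X0‖²` for all such `B`. -/
theorem minimal_lifting_square_norm
    {H : Type*} [NormedAddCommGroup H] [InnerProductSpace ℂ H] [CompleteSpace H]
    (P0 : H →L[ℂ] H) (hP0sa : IsSelfAdjoint P0) (hP0idem : P0 * P0 = P0)
    (f0 : H) (hf0 : ‖f0‖ = 1) (hf0fix : P0 f0 = f0)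
    (X0 : H →L[ℂ] H) (hX0 : adjoint X0 = -X0)
    (hmin : ∀ B : H →L[ℂ] H, adjoint B = -B → B * P0 = P0 * B → B f0 = 0 →
      ‖X0‖ ≤ ‖X0 + B‖) :
    ∀ B : H →L[ℂ] H, adjoint B = -B → B * P0 = P0 * B → B f0 = 0 →
      ‖X0‖ ^ 2 ≤ ‖X0 * X0 + B * X0 + X0 * B‖ :=
  minimal_lifting_square_norm_general P0 f0 X0 hX0 hmin
end

section
/- Let H be a complex Hilbert space, P0 an orthogonal projection, f0 a unit vector with P0 f0 = f0, and let X ∈ B₂(H) be an anti-Hermitian Hilbert–Schmidt operator. Then Re Tr(X Y*) = 0 for every anti-Hermitian Hilbert–Schmidt Y with Y P0 = P0 Y and Y f0 = 0 if and only if (P0 − f0⊗f0) X (P0 − f0⊗f0) = 0 and (1−P0) X (1−P0) = 0. That is, the horizontal space H_{(P0,f0)} of operators whose diagonal blocks with respect to H = ⟨f0⟩ ⊕ (R(P0)⊖⟨f0⟩) ⊕ N(P0) vanish except possibly the (1,1) entry is the orthogonal complement of the vertical space in B₂(H)_{ah} for the trace inner product. -/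
open scoped InnerProductSpace
open ContinuousLinearMap

/-- `X` is a Hilbert–Schmidt operator, expressed via the Hilbert basis `e`. -/
def IsHilbertSchmidt {H : Type*} [NormedAddCommGroup H] [InnerProductSpace ℂ H]
    [CompleteSpace H] {ι : Type*} (e : HilbertBasis ι ℂ H) (X : H →L[ℂ] H) : Prop :=
  Summable fun i => ‖X (e i)‖ ^ 2

/-- The real trace inner product `Re Tr(X Y*) = ∑ᵢ Re ⟪X eᵢ, Y eᵢ⟫` of Hilbert–Schmidt
operators, expressed via the Hilbert basis `e`. -/
noncomputable def hsReInner {H : Type*} [NormedAddCommGroup H] [InnerProductSpace ℂ H]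
    [CompleteSpace H] {ι : Type*} (e : HilbertBasis ι ℂ H) (X Y : H →L[ℂ] H) : ℝ :=
  ∑' i, ((⟪X (e i), Y (e i)⟫_ℂ : ℂ)).re

/-! Put `Q = P0 - f0⊗f0` and `R = 1 - P0`: orthogonal projections with `f0⊗f0 + Q + R = 1`.
A vertical `Y` kills `f0`, and so does `Y* = -Y`; hence `Y` commutes with `f0⊗f0`, `Q` and `R`,
and `Y = QYQ + RYR`. As `Re Tr(X (QYQ)*) = Re Tr((QXQ) Y*)`, the two block conditions make `X`
orthogonal to every vertical `Y`. Conversely `QXQ` and `RXR` are themselves vertical, and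
`Re Tr(X (QXQ)*) = ‖QXQ‖²_HS`, so orthogonality to them forces both blocks to vanish. -/

theorem summable_mul_of_summable_sq {α : Type*} {f g : α → ℝ} (hf : Summable fun i => f i ^ 2)
    (hg : Summable fun i => g i ^ 2) : Summable fun i => f i * g i :=
  ((hf.add hg).div_const 2).of_norm_bounded fun i => by
    rw [Real.norm_eq_abs, abs_mul]
    nlinarith [sq_nonneg (|f i| - |g i|), sq_abs (f i), sq_abs (g i)]

section HilbertBasis

variable {𝕜 H : Type*} [RCLike 𝕜] [NormedAddCommGroup H] [InnerProductSpace 𝕜 H] {ι : Type*}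

theorem HilbertBasis.hasSum_norm_inner_sq (e : HilbertBasis ι 𝕜 H) (x : H) :
    HasSum (fun i => ‖⟪x, e i⟫_𝕜‖ ^ 2) (‖x‖ ^ 2) := by
  have h := (e.hasSum_inner_mul_inner x x).mapL (RCLike.reCLM (K := 𝕜))
  rw [RCLike.reCLM_apply, inner_self_eq_norm_sq] at h
  refine h.congr_fun fun i => ?_
  rw [← inner_conj_symm (e i) x, RCLike.mul_conj, ← RCLike.ofReal_pow,
    RCLike.ofReal_re]

theorem HilbertBasis.continuousLinearMap_ext {E : Type*} [TopologicalSpace E] [AddCommGroup E]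
    [Module 𝕜 E] [T2Space E] (e : HilbertBasis ι 𝕜 H) {A B : H →L[𝕜] E}
    (h : ∀ i, A (e i) = B (e i)) : A = B :=
  ContinuousLinearMap.ext_on (Submodule.dense_iff_topologicalClosure_eq_top.mpr e.dense_span)
    (by rintro _ ⟨i, rfl⟩; exact h i)

end HilbertBasis

theorem ContinuousLinearMap.adjoint_mul {𝕜 E : Type*} [RCLike 𝕜] [NormedAddCommGroup E]
    [InnerProductSpace 𝕜 E] [CompleteSpace E] (A B : E →L[𝕜] E) :
    (A * B).adjoint = B.adjoint * A.adjoint :=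
  adjoint_comp A B

section RankOne

variable {H : Type*} [NormedAddCommGroup H] [InnerProductSpace ℂ H]

theorem rankOne_eq_innerProductSpace_rankOne (x y : H) :
    rankOne x y = InnerProductSpace.rankOne ℂ x y :=
  rfl

theorem mul_rankOne (A : H →L[ℂ] H) (x y : H) : A * rankOne x y = rankOne (A x) y :=
  InnerProductSpace.comp_rankOne x y A

theorem rankOne_mul [CompleteSpace H] (x y : H) (A : H →L[ℂ] H) :
    rankOne x y * A = rankOne x (A.adjoint y) := by
  ext z
  exact congrArg (· • x) (adjoint_inner_left A z y).symm

theorem isStarProjection_rankOne_self [CompleteSpace H] {x : H} (hx : ‖x‖ = 1) :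
    IsStarProjection (rankOne x x) :=
  InnerProductSpace.isStarProjection_rankOne_self hx

theorem rankOne_self_apply_self {x : H} (hx : ‖x‖ = 1) : rankOne x x x = x := by
  rw [rankOne_eq_innerProductSpace_rankOne, InnerProductSpace.rankOne_apply,
    inner_self_eq_norm_sq_to_K, hx, RCLike.ofReal_one, one_pow, one_smul]

end RankOne

theorem commute_conj_of_mul_eq_self {R : Type*} [Semigroup R] {P Q : R} (hQP : Q * P = Q)
    (hPQ : P * Q = Q) (Z : R) : Commute (Q * Z * Q) P := by
  change Q * Z * Q * P = P * (Q * Z * Q)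
  rw [mul_assoc _ Q P, hQP, ← mul_assoc, ← mul_assoc, hPQ]

theorem commute_conj_of_mul_eq_zero {R : Type*} [SemigroupWithZero R] {P Q : R}
    (hQP : Q * P = 0) (hPQ : P * Q = 0) (Z : R) : Commute (Q * Z * Q) P := by
  change Q * Z * Q * P = P * (Q * Z * Q)
  rw [mul_assoc _ Q P, hQP, ← mul_assoc, ← mul_assoc, hPQ, mul_zero, zero_mul, zero_mul]

theorem eq_conj_sub_add_conj_one_sub {R : Type*} [Ring R] {P F Y : R} (hP : IsIdempotentElem P)
    (hYP : Commute Y P) (hYF : Y * F = 0) (hFY : F * Y = 0) :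
    Y = (P - F) * Y * (P - F) + (1 - P) * Y * (1 - P) := by
  have hsub : (P - F) * Y * (P - F) = Y * P := by
    rw [sub_mul, hFY, sub_zero, mul_sub, mul_assoc P Y F, hYF, mul_zero, sub_zero, ← hYP.eq,
      mul_assoc, hP.eq]
  have hone_sub : (1 - P) * Y * (1 - P) = Y * (1 - P) := by
    rw [← ((Commute.one_right Y).sub_right hYP).eq, mul_assoc, hP.one_sub.eq]
  rw [hsub, hone_sub, ← mul_add, add_sub_cancel, mul_one]

noncomputable def hsInner {H : Type*} [NormedAddCommGroup H] [InnerProductSpace ℂ H]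
    {ι : Type*} (e : HilbertBasis ι ℂ H) (A B : H →L[ℂ] H) : ℂ :=
  ∑' i, ⟪A (e i), B (e i)⟫_ℂ

section HilbertSchmidt

variable {H : Type*} [NormedAddCommGroup H] [InnerProductSpace ℂ H] [CompleteSpace H]
  {ι : Type*} {e : HilbertBasis ι ℂ H} {A B : H →L[ℂ] H}

theorem IsHilbertSchmidt.summable_norm_inner_sq (hA : IsHilbertSchmidt e A) :
    Summable fun p : ι × ι => ‖⟪A (e p.1), e p.2⟫_ℂ‖ ^ 2 := by
  refine (summable_prod_of_nonneg fun _ => sq_nonneg _).mpr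
    ⟨fun i => (e.hasSum_norm_inner_sq (A (e i))).summable, ?_⟩
  exact Summable.congr hA fun i => ((e.hasSum_norm_inner_sq _).tsum_eq).symm

theorem IsHilbertSchmidt.adjoint (hA : IsHilbertSchmidt e A) :
    IsHilbertSchmidt e A.adjoint := by
  have hswap : Summable fun p : ι × ι => ‖⟪A.adjoint (e p.1), e p.2⟫_ℂ‖ ^ 2 :=
    hA.summable_norm_inner_sq.prod_symm.congr fun p => by
      rw [adjoint_inner_left, norm_inner_symm, Prod.fst_swap, Prod.snd_swap]
  have hrows : Summable fun i => ∑' j, ‖⟪A.adjoint (e i), e j⟫_ℂ‖ ^ 2 := hswap.prod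
  have hnorms : Summable fun i => ‖A.adjoint (e i)‖ ^ 2 :=
    hrows.congr fun i => (e.hasSum_norm_inner_sq _).tsum_eq
  exact hnorms

theorem IsHilbertSchmidt.mul_left (hA : IsHilbertSchmidt e A) (B : H →L[ℂ] H) :
    IsHilbertSchmidt e (B * A) :=
  (Summable.mul_left (‖B‖ ^ 2) hA).of_nonneg_of_le (fun _ => sq_nonneg _) fun i => by
    rw [← mul_pow]
    exact pow_le_pow_left₀ (norm_nonneg _) (B.le_opNorm _) 2

theorem IsHilbertSchmidt.mul_right (hA : IsHilbertSchmidt e A) (B : H →L[ℂ] H) :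
    IsHilbertSchmidt e (A * B) := by
  simpa [← star_eq_adjoint, star_mul] using (hA.adjoint.mul_left B.adjoint).adjoint

theorem IsHilbertSchmidt.summable_inner (hA : IsHilbertSchmidt e A) (hB : IsHilbertSchmidt e B) :
    Summable fun i => ⟪A (e i), B (e i)⟫_ℂ :=
  (summable_mul_of_summable_sq hA hB).of_norm_bounded fun _ => norm_inner_le_norm _ _

theorem IsHilbertSchmidt.eq_zero_of_hsReInner_self (hA : IsHilbertSchmidt e A)
    (h : hsReInner e A A = 0) : A = 0 := by
  have hsum : HasSum (fun i => ‖A (e i)‖ ^ 2) 0 := by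
    convert hA.hasSum using 1
    rw [← h]
    exact tsum_congr fun i => by simp [inner_self_eq_norm_sq_to_K, ← Complex.ofReal_pow]
  have hzero := (hasSum_zero_iff_of_nonneg fun _ => sq_nonneg _).mp hsum
  exact e.continuousLinearMap_ext fun i => by simpa using congrFun hzero i

theorem re_hsInner (hA : IsHilbertSchmidt e A) (hB : IsHilbertSchmidt e B) :
    (hsInner e A B).re = hsReInner e A B :=
  Complex.re_tsum (hA.summable_inner hB)

theorem hsInner_add_right {C : H →L[ℂ] H} (hA : IsHilbertSchmidt e A)
    (hB : IsHilbertSchmidt e B) (hC : IsHilbertSchmidt e C) :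
    hsInner e A (B + C) = hsInner e A B + hsInner e A C := by
  simp only [hsInner, add_apply, inner_add_right]
  exact (hA.summable_inner hB).tsum_add (hA.summable_inner hC)

/-- `Tr(A B*) = Tr(B* A)`: both sides are the absolutely convergent double sum
`∑ i j, ⟪A eᵢ, eⱼ⟫ ⟪eⱼ, B eᵢ⟫`, taken in the two orders. -/
theorem hsInner_eq_hsInner_adjoint (hA : IsHilbertSchmidt e A) (hB : IsHilbertSchmidt e B) :
    hsInner e A B = hsInner e B.adjoint A.adjoint := by
  set F : ι → ι → ℂ := fun i j => ⟪A (e i), e j⟫_ℂ * ⟪e j, B (e i)⟫_ℂ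
  have hrow : ∀ i, HasSum (F i) ⟪A (e i), B (e i)⟫_ℂ := fun i => e.hasSum_inner_mul_inner _ _
  have hcol : ∀ j, HasSum (fun i => F i j) ⟪B.adjoint (e j), A.adjoint (e j)⟫_ℂ := fun j =>
    (e.hasSum_inner_mul_inner _ _).congr_fun fun _ => by
      rw [adjoint_inner_left, adjoint_inner_right, mul_comm]
  have hF : Summable (Function.uncurry F) :=
    (summable_mul_of_summable_sq hA.summable_norm_inner_sq
      hB.summable_norm_inner_sq).of_norm_bounded fun p => by
        rw [Function.uncurry_apply_pair, norm_mul, norm_inner_symm (e p.2)]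
  calc hsInner e A B = ∑' i, ∑' j, F i j := tsum_congr fun i => (hrow i).tsum_eq.symm
    _ = ∑' j, ∑' i, F i j :=
      (hF.tsum_comm' (fun i => (hrow i).summable) fun j => (hcol j).summable).symm
    _ = hsInner e B.adjoint A.adjoint := tsum_congr fun j => (hcol j).tsum_eq

theorem hsInner_mul_left (C A B : H →L[ℂ] H) :
    hsInner e (C * A) B = hsInner e A (C.adjoint * B) :=
  tsum_congr fun _ => (adjoint_inner_right C _ _).symm

theorem hsInner_mul_right (hA : IsHilbertSchmidt e A) (hB : IsHilbertSchmidt e B)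
    (C : H →L[ℂ] H) : hsInner e (A * C) B = hsInner e A (B * C.adjoint) := by
  rw [hsInner_eq_hsInner_adjoint (hA.mul_right C) hB,
    hsInner_eq_hsInner_adjoint hA (hB.mul_right _), adjoint_mul, adjoint_mul, adjoint_adjoint,
    hsInner_mul_left]

theorem hsInner_mul_mul (hA : IsHilbertSchmidt e A) (hB : IsHilbertSchmidt e B)
    (C D : H →L[ℂ] H) :
    hsInner e A (C * B * D) = hsInner e (C.adjoint * A * D.adjoint) B := by
  rw [hsInner_mul_right (hA.mul_left _) hB, adjoint_adjoint, hsInner_mul_left, adjoint_adjoint,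
    mul_assoc]

theorem IsHilbertSchmidt.conj_eq_zero_of_hsReInner_eq_zero {Q X : H →L[ℂ] H}
    (hX : IsHilbertSchmidt e X) (hQ : IsStarProjection Q) (h : hsReInner e X (Q * X * Q) = 0) :
    Q * X * Q = 0 := by
  have hQ' : Q.adjoint = Q := hQ.isSelfAdjoint.adjoint_eq
  have hQXQ : IsHilbertSchmidt e (Q * X * Q) := (hX.mul_left Q).mul_right Q
  have hconj : Q * (Q * X * Q) * Q = Q * X * Q := by
    simp only [← mul_assoc, hQ.isIdempotentElem.eq]
    rw [mul_assoc, hQ.isIdempotentElem.eq]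
  refine hQXQ.eq_zero_of_hsReInner_self ?_
  rw [← re_hsInner hQXQ hQXQ, ← h, ← re_hsInner hX hQXQ]
  congr 1
  calc hsInner e (Q * X * Q) (Q * X * Q) = hsInner e (Q * (Q * X * Q) * Q) X := by
        rw [hsInner_mul_mul hQXQ hX, hQ']
    _ = hsInner e X (Q * X * Q) := by rw [hconj, hsInner_mul_mul hX hX, hQ']

end HilbertSchmidt

def IsVertical {H : Type*} [NormedAddCommGroup H] [InnerProductSpace ℂ H] [CompleteSpace H]
    {ι : Type*} (e : HilbertBasis ι ℂ H) (P0 : H →L[ℂ] H) (f0 : H) (Y : H →L[ℂ] H) : Prop :=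
  Y.adjoint = -Y ∧ IsHilbertSchmidt e Y ∧ Commute Y P0 ∧ Y f0 = 0

section Vertical

variable {H : Type*} [NormedAddCommGroup H] [InnerProductSpace ℂ H] [CompleteSpace H]
  {ι : Type*} {e : HilbertBasis ι ℂ H} {P0 X Y : H →L[ℂ] H} {f0 : H}

theorem IsHilbertSchmidt.isVertical_conj {Q : H →L[ℂ] H} (hX : IsHilbertSchmidt e X)
    (hXah : X.adjoint = -X) (hQ : IsSelfAdjoint Q) (hcomm : Commute (Q * X * Q) P0)
    (hQf0 : Q f0 = 0) : IsVertical e P0 f0 (Q * X * Q) :=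
  ⟨by rw [adjoint_mul, adjoint_mul, hQ.adjoint_eq, hXah, neg_mul, mul_neg, mul_assoc],
    (hX.mul_left Q).mul_right Q, hcomm, by simp [hQf0]⟩

theorem isStarProjection_sub_rankOne (hP0 : IsStarProjection P0) (hf0 : ‖f0‖ = 1)
    (hf0fix : P0 f0 = f0) : IsStarProjection (P0 - rankOne f0 f0) :=
  (isStarProjection_rankOne_self hf0).sub_of_mul_eq_right hP0 (by rw [mul_rankOne, hf0fix])

theorem isVertical_conj_sub_rankOne (hP0 : IsStarProjection P0) (hf0 : ‖f0‖ = 1)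
    (hf0fix : P0 f0 = f0) (hX : IsHilbertSchmidt e X) (hXah : X.adjoint = -X) :
    IsVertical e P0 f0 ((P0 - rankOne f0 f0) * X * (P0 - rankOne f0 f0)) := by
  have hQ := isStarProjection_sub_rankOne hP0 hf0 hf0fix
  refine hX.isVertical_conj hXah hQ.isSelfAdjoint (commute_conj_of_mul_eq_self ?_ ?_ X) ?_
  · rw [sub_mul, hP0.isIdempotentElem.eq, rankOne_mul, hP0.isSelfAdjoint.adjoint_eq, hf0fix]
  · rw [mul_sub, hP0.isIdempotentElem.eq, mul_rankOne, hf0fix]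
  · rw [sub_apply, hf0fix, rankOne_self_apply_self hf0, sub_self]

theorem isVertical_conj_one_sub (hP0 : IsStarProjection P0) (hf0fix : P0 f0 = f0)
    (hX : IsHilbertSchmidt e X) (hXah : X.adjoint = -X) :
    IsVertical e P0 f0 ((1 - P0) * X * (1 - P0)) :=
  hX.isVertical_conj hXah hP0.one_sub.isSelfAdjoint
    (commute_conj_of_mul_eq_zero hP0.one_sub_mul_self hP0.mul_one_sub_self X)
    (by rw [sub_apply, one_apply_eq_self, hf0fix, sub_self])

theorem IsVertical.eq_conj_add_conj (hY : IsVertical e P0 f0 Y) (hP0 : IsStarProjection P0) :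
    Y = (P0 - rankOne f0 f0) * Y * (P0 - rankOne f0 f0) + (1 - P0) * Y * (1 - P0) := by
  obtain ⟨hYah, -, hYP0, hYf0⟩ := hY
  have hYF : Y * rankOne f0 f0 = 0 := by
    rw [mul_rankOne, hYf0, rankOne_eq_innerProductSpace_rankOne, map_zero, zero_apply]
  have hFY : rankOne f0 f0 * Y = 0 := by
    rw [rankOne_mul, hYah, neg_apply, hYf0, neg_zero, rankOne_eq_innerProductSpace_rankOne,
      map_zero]
  exact eq_conj_sub_add_conj_one_sub hP0.isIdempotentElem hYP0 hYF hFY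

end Vertical

/-- An anti-Hermitian Hilbert–Schmidt `X` is orthogonal (for the real
trace inner product) to the vertical space at `(P0, f0)` iff its diagonal blocks
`(P0 − f0⊗f0) X (P0 − f0⊗f0)` and `(1−P0) X (1−P0)` vanish, i.e. iff it is horizontal. -/
theorem horizontal_iff_orthogonal_vertical
    {H : Type*} [NormedAddCommGroup H] [InnerProductSpace ℂ H] [CompleteSpace H]
    {ι : Type*} (e : HilbertBasis ι ℂ H)
    (P0 : H →L[ℂ] H) (hP0sa : IsSelfAdjoint P0) (hP0idem : P0 * P0 = P0)
    (f0 : H) (hf0 : ‖f0‖ = 1) (hf0fix : P0 f0 = f0)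
    (X : H →L[ℂ] H) (hXhs : IsHilbertSchmidt e X) (hXah : adjoint X = -X) :
    (∀ Y : H →L[ℂ] H, adjoint Y = -Y → IsHilbertSchmidt e Y →
        Y * P0 = P0 * Y → Y f0 = 0 → hsReInner e X Y = 0) ↔
    ((P0 - rankOne f0 f0) * X * (P0 - rankOne f0 f0) = 0 ∧
      (1 - P0) * X * (1 - P0) = 0) := by
  have hP0 : IsStarProjection P0 := ⟨hP0idem, hP0sa⟩
  have hQ := isStarProjection_sub_rankOne hP0 hf0 hf0fix
  constructor
  · intro h
    obtain ⟨hQah, hQhs, hQP0, hQf0⟩ := isVertical_conj_sub_rankOne hP0 hf0 hf0fix hXhs hXah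
    obtain ⟨hRah, hRhs, hRP0, hRf0⟩ := isVertical_conj_one_sub (e := e) hP0 hf0fix hXhs hXah
    exact ⟨hXhs.conj_eq_zero_of_hsReInner_eq_zero hQ (h _ hQah hQhs hQP0 hQf0),
      hXhs.conj_eq_zero_of_hsReInner_eq_zero hP0.one_sub (h _ hRah hRhs hRP0 hRf0)⟩
  · rintro ⟨hQX, hRX⟩ Y hYah hYhs hYP0 hYf0
    have hdecomp := IsVertical.eq_conj_add_conj ⟨hYah, hYhs, hYP0, hYf0⟩ hP0
    rw [← re_hsInner hXhs hYhs, hdecomp, hsInner_add_right hXhs ((hYhs.mul_left _).mul_right _)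
      ((hYhs.mul_left _).mul_right _), hsInner_mul_mul hXhs hYhs, hsInner_mul_mul hXhs hYhs,
      hQ.isSelfAdjoint.adjoint_eq, hP0.one_sub.isSelfAdjoint.adjoint_eq, hQX, hRX]
    simp [hsInner]
end

section
/- Let K be a Hilbert space (real or complex), let T ∈ B(K) satisfy ‖T − 1‖ < 1, and let M ⊆ K be a closed subspace with orthogonal complement M⊥. Then K = T(M) + M⊥ and T(M) ∩ M⊥ = {0}; i.e. every x ∈ K can be written uniquely as x = T m + n with m ∈ M and n ∈ M⊥. -/
/-!
Let `P` be the orthogonal projection onto `M`. For `m ∈ M`, `x - T m ∈ M⊥` exactly when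
`P (T m) = P x`, so the claim says that the compression `P T|_M : M → M` is bijective.
It is: `P T|_M - 1 = P (T - 1)|_M` has norm at most `‖T - 1‖ < 1`, so the compression is
invertible by the Neumann series.
-/

namespace Submodule

variable {𝕜 E : Type*} [RCLike 𝕜] [NormedAddCommGroup E] [InnerProductSpace 𝕜 E]
  (K : Submodule 𝕜 E) [CompleteSpace K]

noncomputable def compression (T : E →L[𝕜] E) : K →L[𝕜] K :=
  K.orthogonalProjectionOnto ∘L T ∘L K.subtypeL

variable {K}

theorem compression_apply (T : E →L[𝕜] E) (m : K) :
    K.compression T m = K.orthogonalProjectionOnto (T m) :=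
  rfl

variable (K)

theorem compression_one : K.compression 1 = 1 := by
  ext m
  simp [compression_apply]

theorem compression_sub (S T : E →L[𝕜] E) :
    K.compression (S - T) = K.compression S - K.compression T := by
  ext m
  simp [compression_apply]

theorem norm_compression_le (T : E →L[𝕜] E) : ‖K.compression T‖ ≤ ‖T‖ :=
  calc ‖K.compression T‖ ≤ ‖K.orthogonalProjectionOnto‖ * (‖T‖ * ‖K.subtypeL‖) :=
        (K.orthogonalProjectionOnto.opNorm_comp_le _).trans (by gcongr; exact T.opNorm_comp_le _)
    _ ≤ 1 * (‖T‖ * 1) := by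
        gcongr
        exacts [K.orthogonalProjectionOnto_norm_le, K.norm_subtypeL_le]
    _ = ‖T‖ := by ring

theorem isUnit_compression_of_norm_sub_one_lt {T : E →L[𝕜] E} (hT : ‖T - 1‖ < 1) :
    IsUnit (K.compression T) := by
  have hsmall : ‖1 - K.compression T‖ < 1 := by
    rw [← K.compression_one, ← compression_sub]
    exact (K.norm_compression_le _).trans_lt (by rwa [norm_sub_rev])
  simpa only [sub_sub_cancel] using isUnit_one_sub_of_norm_lt_one hsmall

variable {K}

theorem sub_mem_orthogonal_iff_compression_eq (T : E →L[𝕜] E) (x : E) (m : K) :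
    x - T m ∈ Kᗮ ↔ K.compression T m = K.orthogonalProjectionOnto x := by
  rw [← orthogonalProjectionOnto_eq_zero_iff, map_sub, sub_eq_zero, compression_apply, eq_comm]

theorem existsUnique_sub_mem_orthogonal_of_norm_sub_one_lt {T : E →L[𝕜] E} (hT : ‖T - 1‖ < 1)
    (x : E) : ∃! m : K, x - T m ∈ Kᗮ := by
  simp only [sub_mem_orthogonal_iff_compression_eq]
  exact ContinuousLinearMap.isUnit_iff_bijective.mp
    (K.isUnit_compression_of_norm_sub_one_lt hT) |>.existsUnique _

end Submodule

/-- If `T ∈ B(K)` satisfies `‖T − 1‖ < 1` and `M` is a closed subspace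
of the Hilbert space `K`, then `K = T(M) ∔ M⊥`: every `x ∈ K` is uniquely of the form
`x = T m + n` with `m ∈ M`, `n ∈ M⊥`; in particular `T(M) ∩ M⊥ = {0}`. -/
theorem tm_plus_orthogonal_complement
    {𝕜 : Type*} [RCLike 𝕜] {K : Type*} [NormedAddCommGroup K]
    [InnerProductSpace 𝕜 K] [CompleteSpace K]
    (T : K →L[𝕜] K) (hT : ‖T - 1‖ < 1)
    (M : Submodule 𝕜 K) (hM : IsClosed (M : Set K)) :
    (∀ x : K, ∃ m ∈ M, ∃ n ∈ Mᗮ, x = T m + n ∧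
      ∀ m' ∈ M, ∀ n' ∈ Mᗮ, x = T m' + n' → m' = m ∧ n' = n) ∧
    (M.map (T : K →ₗ[𝕜] K) : Set K) ∩ (Mᗮ : Set K) = {0} := by
  have : CompleteSpace M := hM.completeSpace_coe
  have unique := M.existsUnique_sub_mem_orthogonal_of_norm_sub_one_lt hT
  refine ⟨fun x => ?_, ?_⟩
  · obtain ⟨m, hm, hm_unique⟩ := unique x
    refine ⟨m, m.2, x - T m, hm, (add_sub_cancel _ _).symm, fun m' hm' n' hn' hx => ?_⟩
    have hn'_eq : x - T m' = n' := by rw [hx, add_sub_cancel_left]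
    have hm'_eq : m' = m := congrArg Subtype.val (hm_unique ⟨m', hm'⟩ (hn'_eq ▸ hn' :))
    exact ⟨hm'_eq, by rw [← hn'_eq, hm'_eq]⟩
  · refine Set.eq_singleton_iff_unique_mem.2 ⟨⟨⟨0, M.zero_mem, map_zero T⟩, Mᗮ.zero_mem⟩, ?_⟩
    rintro _ ⟨⟨m, hm, rfl⟩, hTm⟩
    have hm_zero : (⟨m, hm⟩ : M) = 0 :=
      (unique 0).unique (by simpa using hTm) (by simp)
    simpa using congrArg (fun m : M => T m) hm_zero
end
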